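/- arXiv:2006.08169 — 6 statements merged into one kernel-verified Lean document; each statement's English description precedes it below -/
import Mathlib

section
/- (i) Let R = ℝ[ε₋,ε₊]/(ε₋², ε₊²) (a commutative ring, e.g. the iterated dual numbers DualNumber (DualNumber ℝ)). Let J_S be the 5×5 matrix over R whose rows are (1,0,0,−ε₋/2,0), (0,1,0,0,−ε₊/2), (0,0,1,ε₊/2,−ε₋/2), (0,0,0,1,0), (0,0,0,0,1), with block decomposition A = I₃ (rows/columns 1–3), B the upper-right 3×2 block, C = 0 the lower-left 2×3 block, and D = I₂. Then Z₂²Ber(J_S) := det(A − B·D⁻¹·C)·(det D)⁻¹ = 1. (ii) For every β ∈ ℝ, setting A = diag(e^{−β}, e^{β}, 1) and D = diag(e^{−β/2}, e^{β/2}) (the blocks of the Jacobian of a Lorentz boost of rapidity β on Z₂²-Minkowski spacetime), one has det(A)·(det D)⁻¹ = 1. Hence the coordinate Berezin volume is invariant under infinitesimal Z₂²-supertranslations and under Lorentz boosts. -/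
noncomputable section

open Matrix

/-- The upper-right `3 × 2` block `B` of the Jacobian matrix `J_S` of an infinitesimal
`ℤ₂²`-supertranslation of `ℤ₂²`-Minkowski spacetime with square-zero parameters
`ε₋, ε₊`. -/
def Bblock (R : Type*) [CommRing R] [Algebra ℝ R] (εm εp : R) : Matrix (Fin 3) (Fin 2) R :=
  !![-((1/2 : ℝ) • εm), 0;
     0, -((1/2 : ℝ) • εp);
     (1/2 : ℝ) • εp, -((1/2 : ℝ) • εm)]

/-- The Jacobian matrix `J_S` of an infinitesimal `ℤ₂²`-supertranslation, with block
decomposition `A = I₃`, `B = Bblock`, `C = 0`, `D = I₂`. -/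
def JS (R : Type*) [CommRing R] [Algebra ℝ R] (εm εp : R) :
    Matrix (Fin 3 ⊕ Fin 2) (Fin 3 ⊕ Fin 2) R :=
  Matrix.fromBlocks 1 (Bblock R εm εp) 0 1

/-- Proposition 2.4: the coordinate Berezin volume on `ℤ₂²`-Minkowski spacetime is
invariant under infinitesimal `ℤ₂²`-supertranslations and under Lorentz boosts, i.e.
(i) the `ℤ₂²`-Berezinian `det(A − B·D⁻¹·C)·(det D)⁻¹` of the Jacobian `J_S` of an
infinitesimal `ℤ₂²`-supertranslation equals `1`, and (ii) for every rapidity `β`, the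
`ℤ₂²`-Berezinian `det(A)·(det D)⁻¹` of the Jacobian of the Lorentz boost, with blocks
`A = diag(e^{−β}, e^{β}, 1)` and `D = diag(e^{−β/2}, e^{β/2})`, equals `1`. -/
theorem berezin_volume_invariant_under_supertranslations_and_boosts
    (R : Type*) [CommRing R] [Algebra ℝ R] (εm εp : R)
    (hεm : εm * εm = 0) (hεp : εp * εp = 0) :
    (((1 : Matrix (Fin 3) (Fin 3) R) -
          Bblock R εm εp * (1 : Matrix (Fin 2) (Fin 2) R)⁻¹ * (0 : Matrix (Fin 2) (Fin 3) R)).det *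
        Ring.inverse (1 : Matrix (Fin 2) (Fin 2) R).det = 1) ∧
    ∀ β : ℝ,
      (Matrix.diagonal ![Real.exp (-β), Real.exp β, 1]).det *
        ((Matrix.diagonal ![Real.exp (-(β/2)), Real.exp (β/2)]).det)⁻¹ = 1 := by
  constructor
  · simp
  · intro β
    simp [Fin.prod_univ_three, ← Real.exp_add]
end
end

section
/- Let A be a real Banach algebra and let Xᵃ, ψ₊ᵃ, ψ₋ᵃ, Fᵃ : ℝ² → A (a = 1,…,n) be smooth fields and ε₋, ε₊ ∈ A constants, all homogeneous of Z₂²-degrees deg Xᵃ = (0,0), deg ψ₊ᵃ = deg ε₋ = (0,1), deg ψ₋ᵃ = deg ε₊ = (1,0), deg Fᵃ = (1,1), such that any two values u, v of these fields or constants (at any points) satisfy uv = (−1)^⟨deg u, deg v⟩vu. Let η_{ba} be a symmetric real matrix and set L₀ := Σ_{a,b}(¼∂₋Xᵃ∂₊Xᵇ + ½ψ₊ᵃ∂₊ψ₊ᵇ + ½ψ₋ᵃ∂₋ψ₋ᵇ − FᵃFᵇ)η_{ba}. Define the supersymmetry variations δXᵃ = ε₋ψ₊ᵃ + ε₊ψ₋ᵃ,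 δψ₊ᵃ = −½ε₋∂₋Xᵃ + ε₊Fᵃ, δψ₋ᵃ = −½ε₊∂₊Xᵃ + ε₋Fᵃ, δFᵃ = −½(ε₋∂₋ψ₋ᵃ + ε₊∂₊ψ₊ᵃ), and the first variation δL₀ := Σ_{a,b}η_{ba}[¼(∂₋(δXᵃ)∂₊Xᵇ + ∂₋Xᵃ∂₊(δXᵇ)) + ½(δψ₊ᵃ∂₊ψ₊ᵇ + ψ₊ᵃ∂₊(δψ₊ᵇ)) + ½(δψ₋ᵃ∂₋ψ₋ᵇ + ψ₋ᵃ∂₋(δψ₋ᵇ)) − (δFᵃ·Fᵇ + Fᵃ·δFᵇ)]. Then there exist smooth maps V⁻, V⁺ : ℝ² → A with δL₀ = ∂₋V⁻ + ∂₊V⁺; in particular, if all fields are compactly supported then ∫_{ℝ²} δL₀ = 0, i.e. the component action of the Z₂²-graded linear sigma model is invariant under Z₂²-supersymmetry. -/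
noncomputable section

/-- The group `ℤ₂ × ℤ₂`. -/
abbrev G2 : Type := ZMod 2 × ZMod 2

/-- The standard scalar product on `ℤ₂ × ℤ₂`. -/
def ip (γ γ' : G2) : ZMod 2 := γ.1 * γ'.1 + γ.2 * γ'.2

/-- The Koszul sign `(-1)^x`. -/
def ksign (x : ZMod 2) : ℝ := if x = 0 then 1 else -1

/-- Two-dimensional Minkowski spacetime in light-cone coordinates `(x⁻, x⁺)`. -/
abbrev E2 : Type := ℝ × ℝ

/-- The light-cone partial derivative `∂₋`. -/
def pdm {W : Type*} [NormedAddCommGroup W] [NormedSpace ℝ W] (f : E2 → W) : E2 → W :=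
  fun p => fderiv ℝ f p (1, 0)

/-- The light-cone partial derivative `∂₊`. -/
def pdp {W : Type*} [NormedAddCommGroup W] [NormedSpace ℝ W] (f : E2 → W) : E2 → W :=
  fun p => fderiv ℝ f p (0, 1)

namespace Z22Aux

open MeasureTheory Set

section W
variable {W : Type*} [NormedAddCommGroup W] [NormedSpace ℝ W]

lemma dof {f : E2 → W} (hf : ContDiff ℝ (⊤:ℕ∞) f) : Differentiable ℝ f :=
  hf.differentiable (by simp)

lemma pd_contDiff {f : E2 → W} (hf : ContDiff ℝ (⊤:ℕ∞) f) (v : E2) :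
    ContDiff ℝ (⊤:ℕ∞) (fun p => fderiv ℝ f p v) :=
  (hf.fderiv_right (by exact_mod_cast le_top)).clm_apply contDiff_const

lemma pd_swap {f : E2 → W} (hf : ContDiff ℝ (⊤:ℕ∞) f) (p : E2) :
    fderiv ℝ (fun q => fderiv ℝ f q (1,0)) p (0,1)
      = fderiv ℝ (fun q => fderiv ℝ f q (0,1)) p (1,0) := by
  have hd : Differentiable ℝ (fderiv ℝ f) :=
    (hf.fderiv_right (m := ((⊤:ℕ∞) : WithTop ℕ∞)) (by exact_mod_cast le_top)).differentiable
      (by simp)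
  have key : ∀ (w v : E2), fderiv ℝ (fun q => fderiv ℝ f q w) p v
      = fderiv ℝ (fderiv ℝ f) p v w := by
    intro w v
    rw [fderiv_clm_apply (hd p) (differentiableAt_const w)]
    simp
  rw [key, key]
  have hsym : IsSymmSndFDerivAt ℝ f p :=
    hf.contDiffAt.isSymmSndFDerivAt (by rw [minSmoothness_of_isRCLikeNormedField]; exact WithTop.coe_le_coe.mpr le_top)
  exact hsym _ _

lemma hcs_pd {f : E2 → W} (hs : HasCompactSupport f) (v : E2) :
    HasCompactSupport (fun p => fderiv ℝ f p v) := by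
  refine (hs.fderiv ℝ).mono fun q hq => ?_
  simp only [Function.mem_support] at hq ⊢
  intro h0
  exact hq (by simp [h0])

variable [CompleteSpace W]

lemma int_pd_zero (vsel : Bool) {g : E2 → W} (hg : ContDiff ℝ (⊤:ℕ∞) g)
    (hs : HasCompactSupport g) :
    (∫ p : E2, fderiv ℝ g p (if vsel then (1,0) else (0,1))) = 0 := by
  set v : E2 := if vsel then (1,0) else (0,1) with hv
  have hcont : Continuous (fun p : E2 => fderiv ℝ g p v) := (pd_contDiff hg v).continuous
  have hint : Integrable (fun p : E2 => fderiv ℝ g p v) :=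
    hcont.integrable_of_hasCompactSupport (hcs_pd hs v)
  rw [Measure.volume_eq_prod] at hint ⊢
  have slice : ∀ (l : ℝ → E2), Isometry l → ContDiff ℝ (⊤:ℕ∞) l →
      (∀ x, HasDerivAt l v x) → (∫ x : ℝ, fderiv ℝ g (l x) v) = 0 := by
    intro l hiso hl hld
    have hgl : ∀ x : ℝ, HasDerivAt (fun x => g (l x)) (fderiv ℝ g (l x) v) x := fun x =>
      ((dof hg (l x)).hasFDerivAt).comp_hasDerivAt x (hld x)
    have hgc : ContDiff ℝ 1 (fun x => g (l x)) :=
      (hg.comp hl).of_le (by exact_mod_cast le_top)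
    have hgs : HasCompactSupport (fun x => g (l x)) :=
      hs.comp_isClosedEmbedding hiso.isClosedEmbedding
    have hde : (fun x : ℝ => fderiv ℝ g (l x) v) = deriv (fun x => g (l x)) :=
      funext fun x => ((hgl x).deriv).symm
    rw [hde]
    have hi : Integrable (deriv (fun x => g (l x))) :=
      (hgc.continuous_deriv le_rfl).integrable_of_hasCompactSupport hgs.deriv
    rw [← intervalIntegral.integral_Iic_add_Ioi (b := 0) hi.integrableOn hi.integrableOn,
      HasCompactSupport.integral_Iic_deriv_eq hgc hgs 0,
      HasCompactSupport.integral_Ioi_deriv_eq hgc hgs 0]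
    simp
  cases vsel with
  | true =>
    rw [integral_prod_symm _ hint]
    have inner : ∀ y : ℝ, (∫ x : ℝ, fderiv ℝ g (x, y) v) = 0 := by
      intro y
      exact slice (fun x => (x, y)) (by intro a b; simp [Prod.edist_eq])
        (contDiff_id.prodMk contDiff_const)
        (fun x => by simpa [hv] using (hasDerivAt_id x).prodMk (hasDerivAt_const x y))
    simp only [inner, integral_zero]
  | false =>
    rw [integral_prod _ hint]
    have inner : ∀ x : ℝ, (∫ y : ℝ, fderiv ℝ g (x, y) v) = 0 := by
      intro x
      exact slice (fun y => (x, y)) (by intro a b; simp [Prod.edist_eq])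
        (contDiff_const.prodMk contDiff_id)
        (fun y => by simpa [hv] using (hasDerivAt_const y x).prodMk (hasDerivAt_id y))
    simp only [inner, integral_zero]

end W

section A
variable {A : Type*} [NormedRing A] [NormedAlgebra ℝ A]

lemma fderiv_mem {S : Submodule ℝ A} (hS : IsClosed (S : Set A)) {f : E2 → A}
    (hf : Differentiable ℝ f) (hfS : ∀ p, f p ∈ S) (p v : E2) :
    fderiv ℝ f p v ∈ S := by
  have h2 : HasDerivAt (fun t : ℝ => p + t • v) v 0 := by
    simpa using ((hasDerivAt_id (0 : ℝ)).smul_const v).const_add p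
  have h1 : HasFDerivAt f (fderiv ℝ f p) (p + (0 : ℝ) • v) := by
    simpa using (hf p).hasFDerivAt
  have hline : HasDerivAt (fun t : ℝ => f (p + t • v)) (fderiv ℝ f p v) 0 :=
    h1.comp_hasDerivAt 0 h2
  rw [hasDerivAt_iff_tendsto_slope] at hline
  refine hS.mem_of_tendsto hline (Filter.eventually_of_mem self_mem_nhdsWithin ?_)
  intro t ht
  rw [slope_def_module]
  simpa using S.smul_mem _ (S.sub_mem (hfS _) (hfS _))

lemma shape1 (c d : A) {f g : E2 → A} (hf : Differentiable ℝ f) (hg : Differentiable ℝ g)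
    (p v : E2) :
    fderiv ℝ (fun q => c * f q + d * g q) p v = c * fderiv ℝ f p v + d * fderiv ℝ g p v := by
  have h := (((hf p).hasFDerivAt.const_mul c).add ((hg p).hasFDerivAt.const_mul d)).fderiv
  refine (congrArg (fun L => L v) h).trans ?_
  simp [smul_eq_mul]

lemma shape2 (c d : A) (r : ℝ) {f g : E2 → A} (hf : Differentiable ℝ f)
    (hg : Differentiable ℝ g) (p v : E2) :
    fderiv ℝ (fun q => -(r • (c * f q)) + d * g q) p v
      = -(r • (c * fderiv ℝ f p v)) + d * fderiv ℝ g p v := by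
  have h := ((((hf p).hasFDerivAt.const_mul c).const_smul r).neg.add
    ((hg p).hasFDerivAt.const_mul d)).fderiv
  refine (congrArg (fun L => L v) h).trans ?_
  simp [smul_eq_mul]

lemma shape4 (t : ℝ) (c : A) (r s : ℝ) {f1 g1 f2 g2 : E2 → A}
    (hf1 : Differentiable ℝ f1) (hg1 : Differentiable ℝ g1)
    (hf2 : Differentiable ℝ f2) (hg2 : Differentiable ℝ g2) (p v : E2) :
    fderiv ℝ (fun q => t • (c * (r • (f1 q * g1 q) + s • (f2 q * g2 q)))) p v
      = t • (c * (r • (fderiv ℝ f1 p v * g1 p + f1 p * fderiv ℝ g1 p v)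
          + s • (fderiv ℝ f2 p v * g2 p + f2 p * fderiv ℝ g2 p v))) := by
  have h := (((((hf1 p).hasFDerivAt.mul' (hg1 p).hasFDerivAt).const_smul r).add
    (((hf2 p).hasFDerivAt.mul' (hg2 p).hasFDerivAt).const_smul s)).const_mul c
    |>.const_smul t).fderiv
  refine (congrArg (fun L => L v) h).trans ?_
  simp [smul_eq_mul, mul_add, add_comm]

lemma shape_sum2 {n : ℕ} (G : Fin n → Fin n → E2 → A)
    (hG : ∀ i j, Differentiable ℝ (G i j)) (p v : E2) :
    fderiv ℝ (fun q => ∑ i : Fin n, ∑ j : Fin n, G i j q) p v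
      = ∑ i : Fin n, ∑ j : Fin n, fderiv ℝ (G i j) p v := by
  have h : HasFDerivAt (fun q => ∑ i : Fin n, ∑ j : Fin n, G i j q)
      (∑ i : Fin n, ∑ j : Fin n, fderiv ℝ (G i j) p) p := by
    apply HasFDerivAt.fun_sum
    intro i _
    apply HasFDerivAt.fun_sum
    intro j _
    exact ((hG i j) p).hasFDerivAt
  rw [h.fderiv]
  simp

lemma hcs_finsum {ι : Type*} (s : Finset ι) (G : ι → E2 → A)
    (h : ∀ i, HasCompactSupport (G i)) :
    HasCompactSupport (fun q => ∑ i ∈ s, G i q) := by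
  classical
  induction s using Finset.induction_on with
  | empty => simp only [Finset.sum_empty]; exact HasCompactSupport.zero
  | insert _ _ ha ih =>
    simp only [Finset.sum_insert ha]
    exact (h _).add ih

lemma contDiff_finsum {ι : Type*} (s : Finset ι) (G : ι → E2 → A)
    (h : ∀ i, ContDiff ℝ (⊤:ℕ∞) (G i)) :
    ContDiff ℝ (⊤:ℕ∞) (fun q => ∑ i ∈ s, G i q) := by
  classical
  induction s using Finset.induction_on with
  | empty => simp only [Finset.sum_empty]; exact contDiff_const
  | insert _ _ ha ih =>
    simp only [Finset.sum_insert ha]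
    exact (h _).add ih

lemma hcs_wrap {f : E2 → A} (t : ℝ) (c : A) (hf : HasCompactSupport f) :
    HasCompactSupport (fun q => t • (c * f q)) := by
  refine hf.mono fun q hq => ?_
  simp only [Function.mem_support] at hq ⊢
  intro h0
  exact hq (by simp [h0])

lemma hcs_smul {f : E2 → A} (t : ℝ) (hf : HasCompactSupport f) :
    HasCompactSupport (fun q => t • f q) := by
  refine hf.mono fun q hq => ?_
  simp only [Function.mem_support] at hq ⊢
  intro h0
  exact hq (by simp [h0])

lemma hcs_mulr {f g : E2 → A} (hf : HasCompactSupport f) :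
    HasCompactSupport (fun q => f q * g q) := by
  refine hf.mono fun q hq => ?_
  simp only [Function.mem_support] at hq ⊢
  intro h0
  exact hq (by simp [h0])

lemma sum_antisymm {n : ℕ} (η : Fin n → Fin n → ℝ) (hη : ∀ i j, η i j = η j i)
    (c : Fin n → Fin n → A) (hc : ∀ i j, c i j = -c j i) :
    ∑ i : Fin n, ∑ j : Fin n, η j i • c i j = 0 := by
  have h1 : ∑ i : Fin n, ∑ j : Fin n, η j i • c i j
      = -∑ i : Fin n, ∑ j : Fin n, η j i • c i j := by
    conv_lhs => rw [Finset.sum_comm]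
    rw [← Finset.sum_neg_distrib]
    refine Finset.sum_congr rfl fun j _ => ?_
    rw [← Finset.sum_neg_distrib]
    refine Finset.sum_congr rfl fun i _ => ?_
    rw [hη j i, hc i j]
    simp
  have h2 : (2:ℝ) • (∑ i : Fin n, ∑ j : Fin n, η j i • c i j) = 0 := by
    rw [two_smul]
    nth_rewrite 1 [h1]
    simp
  have := congrArg (fun x => ((2:ℝ)⁻¹) • x) h2
  simpa [smul_smul] using this

lemma key_alg (em ep ψpi ψmi fi fj dxi dxj exi exj dψpi dψmi dψmj eψpi eψpj eψmi eψmj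
    dexj efj dfj : A)
    (h1 : ∀ z, ψpi * (em * z) = -(em * (ψpi * z)))
    (h2 : ∀ z, ψpi * (ep * z) = ep * (ψpi * z))
    (h3 : ∀ z, ψmi * (em * z) = em * (ψmi * z))
    (h4 : ∀ z, ψmi * (ep * z) = -(ep * (ψmi * z)))
    (h5 : ∀ z, fi * (em * z) = -(em * (fi * z)))
    (h6 : ∀ z, fi * (ep * z) = -(ep * (fi * z)))
    (h7 : ∀ z, dxi * (em * z) = em * (dxi * z))
    (h8 : ∀ z, dxi * (ep * z) = ep * (dxi * z))
    (h10 : dxi * eψmj = eψmj * dxi)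
    (h11 : exi * dψmj = dψmj * exi) :
    (1/4:ℝ) • ((em * dψpi + ep * dψmi) * exj + dxi * (em * eψpj + ep * eψmj))
      + (1/2:ℝ) • ((-((1/2:ℝ) • (em * dxi)) + ep * fi) * eψpj
          + ψpi * (-((1/2:ℝ) • (em * dexj)) + ep * efj))
      + (1/2:ℝ) • ((-((1/2:ℝ) • (ep * exi)) + em * fi) * dψmj
          + ψmi * (-((1/2:ℝ) • (ep * dexj)) + em * dfj))
      - (-((1/2:ℝ) • (em * dψmi + ep * eψpi)) * fj
          + fi * -((1/2:ℝ) • (em * dψmj + ep * eψpj)))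
    = (em * ((1/4:ℝ) • (dψpi * exj + ψpi * dexj) + (1/2:ℝ) • (dψmi * fj + ψmi * dfj))
        + ep * ((1/4:ℝ) • (eψmi * dxj + ψmi * dexj) + (1/2:ℝ) • (eψpi * fj + ψpi * efj)))
      + ((1/4:ℝ) • (ep * (dψmi * exj)) + (1/4:ℝ) • (ep * (eψmj * dxi))
          - (1/4:ℝ) • (ep * (dψmj * exi)) - (1/4:ℝ) • (ep * (eψmi * dxj))) := by
  simp only [mul_add, add_mul, mul_neg, neg_mul, mul_smul_comm, smul_mul_assoc, smul_add,
    smul_neg, smul_smul, neg_neg, mul_assoc, h1, h2, h3, h4, h5, h6, h7, h8, h10, h11]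
  module

end A

end Z22Aux

open MeasureTheory in
/-- Theorem 3.5 in component form: the component action of the `ℤ₂²`-graded linear sigma
model is invariant under `ℤ₂²`-supersymmetry; the first variation of the component
Lagrangian is a total divergence `δL₀ = ∂₋V⁻ + ∂₊V⁺`, and for compactly supported fields
the variation of the action vanishes. -/
theorem linear_sigma_model_action_invariant_under_z22_supersymmetry
    {A : Type*} [NormedRing A] [NormedAlgebra ℝ A] [CompleteSpace A]
    (𝒜 : G2 → Submodule ℝ A)
    (hK : ∀ γ γ' (u v : A), u ∈ 𝒜 γ → v ∈ 𝒜 γ' → u * v = ksign (ip γ γ') • (v * u))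
    (hCl : ∀ γ, IsClosed (𝒜 γ : Set A))
    (n : ℕ) (X ψp ψm F : Fin n → E2 → A) (εm εp : A)
    (hXs : ∀ i, ContDiff ℝ (⊤ : ℕ∞) (X i)) (hψps : ∀ i, ContDiff ℝ (⊤ : ℕ∞) (ψp i))
    (hψms : ∀ i, ContDiff ℝ (⊤ : ℕ∞) (ψm i)) (hFs : ∀ i, ContDiff ℝ (⊤ : ℕ∞) (F i))
    (hXd : ∀ i p, X i p ∈ 𝒜 (0, 0)) (hψpd : ∀ i p, ψp i p ∈ 𝒜 (0, 1))
    (hψmd : ∀ i p, ψm i p ∈ 𝒜 (1, 0)) (hFd : ∀ i p, F i p ∈ 𝒜 (1, 1))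
    (hεmd : εm ∈ 𝒜 (0, 1)) (hεpd : εp ∈ 𝒜 (1, 0))
    (η : Fin n → Fin n → ℝ) (hη : ∀ i j, η i j = η j i)
    (L0 : E2 → A)
    (hL0 : L0 = fun p => ∑ i : Fin n, ∑ j : Fin n, η j i •
      ((1/4 : ℝ) • (pdm (X i) p * pdp (X j) p) + (1/2 : ℝ) • (ψp i p * pdp (ψp j) p) +
        (1/2 : ℝ) • (ψm i p * pdm (ψm j) p) - F i p * F j p))
    (dX dψp dψm dF : Fin n → E2 → A)
    (hdX : ∀ i, dX i = fun p => εm * ψp i p + εp * ψm i p)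
    (hdψp : ∀ i, dψp i = fun p => -((1/2 : ℝ) • (εm * pdm (X i) p)) + εp * F i p)
    (hdψm : ∀ i, dψm i = fun p => -((1/2 : ℝ) • (εp * pdp (X i) p)) + εm * F i p)
    (hdF : ∀ i, dF i = fun p => -((1/2 : ℝ) • (εm * pdm (ψm i) p + εp * pdp (ψp i) p)))
    (dL : E2 → A)
    (hdL : dL = fun p => ∑ i : Fin n, ∑ j : Fin n, η j i •
      ((1/4 : ℝ) • (pdm (dX i) p * pdp (X j) p + pdm (X i) p * pdp (dX j) p) +
        (1/2 : ℝ) • (dψp i p * pdp (ψp j) p + ψp i p * pdp (dψp j) p) +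
        (1/2 : ℝ) • (dψm i p * pdm (ψm j) p + ψm i p * pdm (dψm j) p) -
        (dF i p * F j p + F i p * dF j p))) :
    (∃ Vm Vp : E2 → A, ContDiff ℝ (⊤ : ℕ∞) Vm ∧ ContDiff ℝ (⊤ : ℕ∞) Vp ∧
        dL = fun p => pdm Vm p + pdp Vp p) ∧
      ((∀ i, HasCompactSupport (X i) ∧ HasCompactSupport (ψp i) ∧
          HasCompactSupport (ψm i) ∧ HasCompactSupport (F i)) →
        ∫ p : E2, dL p = 0) := by
  classical
  open Z22Aux in
  -- differentiability of the fields and their directional derivatives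
  have dX' : ∀ k, Differentiable ℝ (X k) := fun k => dof (hXs k)
  have dψp' : ∀ k, Differentiable ℝ (ψp k) := fun k => dof (hψps k)
  have dψm' : ∀ k, Differentiable ℝ (ψm k) := fun k => dof (hψms k)
  have dF' : ∀ k, Differentiable ℝ (F k) := fun k => dof (hFs k)
  have dDX : ∀ k (v : E2), Differentiable ℝ (fun q => fderiv ℝ (X k) q v) :=
    fun k v => dof (pd_contDiff (hXs k) v)
  -- membership of derivatives in the graded pieces
  have mX : ∀ k (p v : E2), fderiv ℝ (X k) p v ∈ 𝒜 (0,0) :=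
    fun k p v => fderiv_mem (hCl _) (dX' k) (hXd k) p v
  have mψm : ∀ k (p v : E2), fderiv ℝ (ψm k) p v ∈ 𝒜 (1,0) :=
    fun k p v => fderiv_mem (hCl _) (dψm' k) (hψmd k) p v
  -- Koszul sign helpers
  have anti : ∀ (γ γ' : G2) (u w : A), ksign (ip γ γ') = -1 → u ∈ 𝒜 γ → w ∈ 𝒜 γ' →
      u * w = -(w * u) := by
    intro γ γ' u w hs hu hw
    rw [hK γ γ' u w hu hw, hs]
    simp
  have comm : ∀ (γ γ' : G2) (u w : A), ksign (ip γ γ') = 1 → u ∈ 𝒜 γ → w ∈ 𝒜 γ' →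
      u * w = w * u := by
    intro γ γ' u w hs hu hw
    rw [hK γ γ' u w hu hw, hs]
    simp
  have swapA : ∀ {u w : A}, u * w = -(w * u) → ∀ z, u * (w * z) = -(w * (u * z)) := by
    intro u w h z
    rw [← mul_assoc, h]
    simp [mul_assoc]
  have swapC : ∀ {u w : A}, u * w = w * u → ∀ z, u * (w * z) = w * (u * z) := by
    intro u w h z
    rw [← mul_assoc, h, mul_assoc]
  -- the boundary currents
  set Vm : E2 → A := fun q => ∑ i : Fin n, ∑ j : Fin n, η j i •
    (εm * ((1/4:ℝ) • (ψp i q * fderiv ℝ (X j) q (0,1)) + (1/2:ℝ) • (ψm i q * F j q)))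
    with hVmdef
  set Vp : E2 → A := fun q => ∑ i : Fin n, ∑ j : Fin n, η j i •
    (εp * ((1/4:ℝ) • (ψm i q * fderiv ℝ (X j) q (1,0)) + (1/2:ℝ) • (ψp i q * F j q)))
    with hVpdef
  have hVms : ContDiff ℝ (⊤:ℕ∞) Vm := by
    rw [hVmdef]
    refine contDiff_finsum _ _ fun i => contDiff_finsum _ _ fun j => ?_
    exact ((contDiff_const.mul ((((hψps i).mul (pd_contDiff (hXs j) (0,1))).const_smul
      ((1/4:ℝ))).add (((hψms i).mul (hFs j)).const_smul ((1/2:ℝ))))).const_smul (η j i))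
  have hVps : ContDiff ℝ (⊤:ℕ∞) Vp := by
    rw [hVpdef]
    refine contDiff_finsum _ _ fun i => contDiff_finsum _ _ fun j => ?_
    exact ((contDiff_const.mul ((((hψms i).mul (pd_contDiff (hXs j) (1,0))).const_smul
      ((1/4:ℝ))).add (((hψps i).mul (hFs j)).const_smul ((1/2:ℝ))))).const_smul (η j i))
  -- derivative computations (simp rules)
  have edX : ∀ k (p v : E2), fderiv ℝ (fun q => εm * ψp k q + εp * ψm k q) p v
      = εm * fderiv ℝ (ψp k) p v + εp * fderiv ℝ (ψm k) p v :=
    fun k p v => shape1 εm εp (dψp' k) (dψm' k) p v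
  have edψp : ∀ k (p v : E2),
      fderiv ℝ (fun q => -((1/2:ℝ) • (εm * fderiv ℝ (X k) q (1,0))) + εp * F k q) p v
      = -((1/2:ℝ) • (εm * fderiv ℝ (fun q => fderiv ℝ (X k) q (1,0)) p v))
          + εp * fderiv ℝ (F k) p v :=
    fun k p v => shape2 εm εp ((1/2:ℝ)) (dDX k (1,0)) (dF' k) p v
  have edψm : ∀ k (p v : E2),
      fderiv ℝ (fun q => -((1/2:ℝ) • (εp * fderiv ℝ (X k) q (0,1))) + εm * F k q) p v
      = -((1/2:ℝ) • (εp * fderiv ℝ (fun q => fderiv ℝ (X k) q (0,1)) p v))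
          + εm * fderiv ℝ (F k) p v :=
    fun k p v => shape2 εp εm ((1/2:ℝ)) (dDX k (0,1)) (dF' k) p v
  have eswap : ∀ k (p : E2), fderiv ℝ (fun q => fderiv ℝ (X k) q (1,0)) p (0,1)
      = fderiv ℝ (fun q => fderiv ℝ (X k) q (0,1)) p (1,0) :=
    fun k p => pd_swap (hXs k) p
  -- the divergence identity
  have hdiv : dL = fun p => pdm Vm p + pdp Vp p := by
    funext p
    have eVm : fderiv ℝ (fun q => ∑ i : Fin n, ∑ j : Fin n, η j i •
        (εm * ((1/4:ℝ) • (ψp i q * fderiv ℝ (X j) q (0,1)) + (1/2:ℝ) • (ψm i q * F j q))))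
        p (1,0)
        = ∑ i : Fin n, ∑ j : Fin n, η j i •
        (εm * ((1/4:ℝ) • (fderiv ℝ (ψp i) p (1,0) * fderiv ℝ (X j) p (0,1)
              + ψp i p * fderiv ℝ (fun q => fderiv ℝ (X j) q (0,1)) p (1,0))
          + (1/2:ℝ) • (fderiv ℝ (ψm i) p (1,0) * F j p + ψm i p * fderiv ℝ (F j) p (1,0)))) := by
      refine (shape_sum2 _ (fun i j => ?_) p (1,0)).trans
        (Finset.sum_congr rfl fun i _ => Finset.sum_congr rfl fun j _ =>
          shape4 (η j i) εm ((1/4:ℝ)) ((1/2:ℝ)) (dψp' i) (dDX j (0,1)) (dψm' i) (dF' j) p (1,0))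
      exact (((((dψp' i).mul (dDX j (0,1))).const_smul ((1/4:ℝ))).add
        (((dψm' i).mul (dF' j)).const_smul ((1/2:ℝ)))).const_mul εm).const_smul (η j i)
    have eVp : fderiv ℝ (fun q => ∑ i : Fin n, ∑ j : Fin n, η j i •
        (εp * ((1/4:ℝ) • (ψm i q * fderiv ℝ (X j) q (1,0)) + (1/2:ℝ) • (ψp i q * F j q))))
        p (0,1)
        = ∑ i : Fin n, ∑ j : Fin n, η j i •
        (εp * ((1/4:ℝ) • (fderiv ℝ (ψm i) p (0,1) * fderiv ℝ (X j) p (1,0)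
              + ψm i p * fderiv ℝ (fun q => fderiv ℝ (X j) q (1,0)) p (0,1))
          + (1/2:ℝ) • (fderiv ℝ (ψp i) p (0,1) * F j p + ψp i p * fderiv ℝ (F j) p (0,1)))) := by
      refine (shape_sum2 _ (fun i j => ?_) p (0,1)).trans
        (Finset.sum_congr rfl fun i _ => Finset.sum_congr rfl fun j _ =>
          shape4 (η j i) εp ((1/4:ℝ)) ((1/2:ℝ)) (dψm' i) (dDX j (1,0)) (dψp' i) (dF' j) p (0,1))
      exact (((((dψm' i).mul (dDX j (1,0))).const_smul ((1/4:ℝ))).add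
        (((dψp' i).mul (dF' j)).const_smul ((1/2:ℝ)))).const_mul εp).const_smul (η j i)
    have hC0 : ∑ i : Fin n, ∑ j : Fin n, η j i •
        ((1/4:ℝ) • (εp * (fderiv ℝ (ψm i) p (1,0) * fderiv ℝ (X j) p (0,1)))
          + (1/4:ℝ) • (εp * (fderiv ℝ (ψm j) p (0,1) * fderiv ℝ (X i) p (1,0)))
          - (1/4:ℝ) • (εp * (fderiv ℝ (ψm j) p (1,0) * fderiv ℝ (X i) p (0,1)))
          - (1/4:ℝ) • (εp * (fderiv ℝ (ψm i) p (0,1) * fderiv ℝ (X j) p (1,0)))) = 0 :=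
      sum_antisymm η hη _ (fun i j => by module)
    have mid : ∑ i : Fin n, ∑ j : Fin n,
        ((η j i • (εm * ((1/4:ℝ) • (fderiv ℝ (ψp i) p (1,0) * fderiv ℝ (X j) p (0,1)
              + ψp i p * fderiv ℝ (fun q => fderiv ℝ (X j) q (0,1)) p (1,0))
          + (1/2:ℝ) • (fderiv ℝ (ψm i) p (1,0) * F j p + ψm i p * fderiv ℝ (F j) p (1,0))))
        + η j i • (εp * ((1/4:ℝ) • (fderiv ℝ (ψm i) p (0,1) * fderiv ℝ (X j) p (1,0)
              + ψm i p * fderiv ℝ (fun q => fderiv ℝ (X j) q (0,1)) p (1,0))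
          + (1/2:ℝ) • (fderiv ℝ (ψp i) p (0,1) * F j p + ψp i p * fderiv ℝ (F j) p (0,1)))))
        + η j i • ((1/4:ℝ) • (εp * (fderiv ℝ (ψm i) p (1,0) * fderiv ℝ (X j) p (0,1)))
          + (1/4:ℝ) • (εp * (fderiv ℝ (ψm j) p (0,1) * fderiv ℝ (X i) p (1,0)))
          - (1/4:ℝ) • (εp * (fderiv ℝ (ψm j) p (1,0) * fderiv ℝ (X i) p (0,1)))
          - (1/4:ℝ) • (εp * (fderiv ℝ (ψm i) p (0,1) * fderiv ℝ (X j) p (1,0)))))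
        = (∑ i : Fin n, ∑ j : Fin n, η j i •
        (εm * ((1/4:ℝ) • (fderiv ℝ (ψp i) p (1,0) * fderiv ℝ (X j) p (0,1)
              + ψp i p * fderiv ℝ (fun q => fderiv ℝ (X j) q (0,1)) p (1,0))
          + (1/2:ℝ) • (fderiv ℝ (ψm i) p (1,0) * F j p + ψm i p * fderiv ℝ (F j) p (1,0)))))
        + ∑ i : Fin n, ∑ j : Fin n, η j i •
        (εp * ((1/4:ℝ) • (fderiv ℝ (ψm i) p (0,1) * fderiv ℝ (X j) p (1,0)
              + ψm i p * fderiv ℝ (fun q => fderiv ℝ (X j) q (0,1)) p (1,0))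
          + (1/2:ℝ) • (fderiv ℝ (ψp i) p (0,1) * F j p + ψp i p * fderiv ℝ (F j) p (0,1)))) := by
      simp only [Finset.sum_add_distrib]
      rw [hC0, add_zero]
    simp only [hdL, hdX, hdψp, hdψm, hdF, hVmdef, hVpdef, pdm, pdp]
    rw [eVm, eVp]
    simp only [edX, edψp, edψm, eswap]
    refine Eq.trans (Finset.sum_congr rfl fun i _ => Finset.sum_congr rfl fun j _ => ?_) mid
    rw [← smul_add, ← smul_add]
    refine congrArg (fun z => η j i • z) ?_
    exact key_alg εm εp (ψp i p) (ψm i p) (F i p) (F j p)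
      (fderiv ℝ (X i) p (1,0)) (fderiv ℝ (X j) p (1,0))
      (fderiv ℝ (X i) p (0,1)) (fderiv ℝ (X j) p (0,1))
      (fderiv ℝ (ψp i) p (1,0)) (fderiv ℝ (ψm i) p (1,0)) (fderiv ℝ (ψm j) p (1,0))
      (fderiv ℝ (ψp i) p (0,1)) (fderiv ℝ (ψp j) p (0,1))
      (fderiv ℝ (ψm i) p (0,1)) (fderiv ℝ (ψm j) p (0,1))
      (fderiv ℝ (fun q => fderiv ℝ (X j) q (0,1)) p (1,0))
      (fderiv ℝ (F j) p (0,1)) (fderiv ℝ (F j) p (1,0))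
      (swapA (anti (0,1) (0,1) _ _ (by norm_num [ip, ksign]) (hψpd i p) hεmd))
      (swapC (comm (0,1) (1,0) _ _ (by norm_num [ip, ksign]) (hψpd i p) hεpd))
      (swapC (comm (1,0) (0,1) _ _ (by norm_num [ip, ksign]) (hψmd i p) hεmd))
      (swapA (anti (1,0) (1,0) _ _ (by norm_num [ip, ksign]) (hψmd i p) hεpd))
      (swapA (anti (1,1) (0,1) _ _ (by norm_num [ip, ksign]) (hFd i p) hεmd))
      (swapA (anti (1,1) (1,0) _ _ (by norm_num [ip, ksign]) (hFd i p) hεpd))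
      (swapC (comm (0,0) (0,1) _ _ (by norm_num [ip, ksign]) (mX i p (1,0)) hεmd))
      (swapC (comm (0,0) (1,0) _ _ (by norm_num [ip, ksign]) (mX i p (1,0)) hεpd))
      (comm (0,0) (1,0) _ _ (by norm_num [ip, ksign]) (mX i p (1,0)) (mψm j p (0,1)))
      (comm (0,0) (1,0) _ _ (by norm_num [ip, ksign]) (mX i p (0,1)) (mψm j p (1,0)))
  refine ⟨⟨Vm, Vp, hVms, hVps, hdiv⟩, fun hcs => ?_⟩
  -- the integral of a total divergence of compactly supported currents vanishes
  have hVmc : HasCompactSupport Vm := by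
    rw [hVmdef]
    refine hcs_finsum _ _ fun i => hcs_finsum _ _ fun j => hcs_wrap _ _ ?_
    exact (hcs_smul _ (hcs_mulr (hcs i).2.1)).add (hcs_smul _ (hcs_mulr (hcs i).2.2.1))
  have hVpc : HasCompactSupport Vp := by
    rw [hVpdef]
    refine hcs_finsum _ _ fun i => hcs_finsum _ _ fun j => hcs_wrap _ _ ?_
    exact (hcs_smul _ (hcs_mulr (hcs i).2.2.1)).add (hcs_smul _ (hcs_mulr (hcs i).2.1))
  rw [hdiv]
  have hi1 : Integrable (fun p : E2 => pdm Vm p) :=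
    ((pd_contDiff hVms (1,0)).continuous).integrable_of_hasCompactSupport (hcs_pd hVmc (1,0))
  have hi2 : Integrable (fun p : E2 => pdp Vp p) :=
    ((pd_contDiff hVps (0,1)).continuous).integrable_of_hasCompactSupport (hcs_pd hVpc (0,1))
  rw [integral_add hi1 hi2]
  have z1 : (∫ p : E2, pdm Vm p) = 0 := int_pd_zero true hVms hVmc
  have z2 : (∫ p : E2, pdp Vp p) = 0 := int_pd_zero false hVps hVpc
  rw [z1, z2, add_zero]
end
end

section
/- Let A be a real Banach algebra, X : ℝ² → ℝ a smooth function, ψ₊, ψ₋ : ℝ² → A smooth maps, and α, ε₋, ε₊ ∈ A constants, homogeneous of Z₂²-degrees deg ψ₊ = deg ε₋ = (0,1), deg ψ₋ = deg ε₊ = (1,0), deg α = (1,1), such that any two values u, v of these fields or constants satisfy uv = (−1)^⟨deg u, deg v⟩vu, and α² = 1. Define the Z₂²-graded sine-Gordon component Lagrangian L := ¼∂₋X∂₊X + ½ψ₊∂₊ψ₊ + ½ψ₋∂₋ψ₋ + ¼sin²(X/2) − ½αψ₋ψ₊cos(X/2), the on-shell supersymmetry variations δX := ε₋ψ₊ +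 ε₊ψ₋, δψ₊ := −½(ε₋∂₋X + ε₊α sin(X/2)), δψ₋ := −½(ε₊∂₊X + ε₋α sin(X/2)), and the first variation δL := ¼(∂₋(δX)∂₊X + ∂₋X∂₊(δX)) + ½(δψ₊∂₊ψ₊ + ψ₊∂₊(δψ₊)) + ½(δψ₋∂₋ψ₋ + ψ₋∂₋(δψ₋)) + ⅛sin(X)·δX − ½α(δψ₋·ψ₊ + ψ₋·δψ₊)cos(X/2) + ¼αψ₋ψ₊ sin(X/2)·δX. Then δL = ∂₋( ¼ε₋(ψ₊∂₊X − α sin(X/2)ψ₋) ) + ∂₊( ¼ε₊(ψ₋∂₋X − α sin(X/2)ψ₊) ); i.e. the Z₂²-graded sine-Gordon Lagrangian is quasi-invariant under the Z₂²-supersymmetry transformations. -/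
noncomputable section

theorem z22_key {A : Type*} [NormedRing A] [NormedAlgebra ℝ A]
    (α εm εp P M Pm Pp Mm Mp : A) (a b m s c : ℝ)
    (hα : α * α = 1) (hPP : P * P = 0) (hMM : M * M = 0)
    (hPM : P * M = M * P) (hPα : P * α = -(α * P)) (hMα : M * α = -(α * M))
    (hPεm : P * εm = -(εm * P)) (hPεp : P * εp = εp * P)
    (hMεm : M * εm = εm * M) (hMεp : M * εp = -(εp * M))
    (hαεm : α * εm = -(εm * α)) (hαεp : α * εp = -(εp * α)) :
    (1/4 : ℝ) • (b • (εm * Pm + εp * Mm) + a • (εm * Pp + εp * Mp)) +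
      (1/2 : ℝ) • ((-((1/2 : ℝ) • (a • εm + s • (εp * α)))) * Pp +
        P * (-((1/2 : ℝ) • (m • εm + (c * (1/2) * b) • (εp * α))))) +
      (1/2 : ℝ) • ((-((1/2 : ℝ) • (b • εp + s • (εm * α)))) * Mm +
        M * (-((1/2 : ℝ) • (m • εp + (c * (1/2) * a) • (εm * α))))) +
      ((1/8) * (2 * s * c)) • (εm * P + εp * M) -
      ((1/2) * c) • (α * ((-((1/2 : ℝ) • (b • εp + s • (εm * α)))) * P +
        M * (-((1/2 : ℝ) • (a • εm + s • (εp * α)))))) +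
      ((1/4) * s) • (α * (M * P) * (εm * P + εp * M))
    = (1/4 : ℝ) • (εm * (m • P + b • Pm - ((c * (1/2) * a) • (α * M) + s • (α * Mm)))) +
      (1/4 : ℝ) • (εp * (m • M + a • Mp - ((c * (1/2) * b) • (α * P) + s • (α * Pp)))) := by
  have ePεm : ∀ z : A, P * (εm * z) = -(εm * (P * z)) := fun z => by
    rw [← mul_assoc, hPεm, neg_mul, mul_assoc]
  have ePεp : ∀ z : A, P * (εp * z) = εp * (P * z) := fun z => by
    rw [← mul_assoc, hPεp, mul_assoc]
  have ePα : ∀ z : A, P * (α * z) = -(α * (P * z)) := fun z => by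
    rw [← mul_assoc, hPα, neg_mul, mul_assoc]
  have eMεm : ∀ z : A, M * (εm * z) = εm * (M * z) := fun z => by
    rw [← mul_assoc, hMεm, mul_assoc]
  have eMεp : ∀ z : A, M * (εp * z) = -(εp * (M * z)) := fun z => by
    rw [← mul_assoc, hMεp, neg_mul, mul_assoc]
  have eMα : ∀ z : A, M * (α * z) = -(α * (M * z)) := fun z => by
    rw [← mul_assoc, hMα, neg_mul, mul_assoc]
  have eαεm : ∀ z : A, α * (εm * z) = -(εm * (α * z)) := fun z => by
    rw [← mul_assoc, hαεm, neg_mul, mul_assoc]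
  have eαεp : ∀ z : A, α * (εp * z) = -(εp * (α * z)) := fun z => by
    rw [← mul_assoc, hαεp, neg_mul, mul_assoc]
  have ePM : ∀ z : A, P * (M * z) = M * (P * z) := fun z => by
    rw [← mul_assoc, hPM, mul_assoc]
  have eαα : ∀ z : A, α * (α * z) = z := fun z => by
    rw [← mul_assoc, hα, one_mul]
  have ePP : ∀ z : A, P * (P * z) = 0 := fun z => by
    rw [← mul_assoc, hPP, zero_mul]
  have eMM : ∀ z : A, M * (M * z) = 0 := fun z => by
    rw [← mul_assoc, hMM, zero_mul]
  simp only [mul_assoc, mul_add, add_mul, mul_sub, sub_mul, mul_neg, neg_mul,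
    mul_smul_comm, smul_mul_assoc, smul_add, smul_sub, smul_neg, smul_smul,
    hPεm, hPεp, hPα, hMεm, hMεp, hMα, hαεm, hαεp, hPM, hα, hPP, hMM,
    ePεm, ePεp, ePα, eMεm, eMεp, eMα, eαεm, eαεp, ePM, eαα, ePP, eMM,
    mul_one, one_mul, mul_zero, zero_mul, smul_zero, neg_neg, neg_zero]
  module

open Real in
/-- Quasi-invariance of the `ℤ₂²`-graded sine-Gordon component Lagrangian under the
on-shell `ℤ₂²`-supersymmetry transformations:
`δL = ∂₋(¼ε₋(ψ₊∂₊X − α sin(X/2)ψ₋)) + ∂₊(¼ε₊(ψ₋∂₋X − α sin(X/2)ψ₊))`. -/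
theorem z22_sine_gordon_lagrangian_quasi_invariant
    {A : Type*} [NormedRing A] [NormedAlgebra ℝ A] [CompleteSpace A]
    (X : E2 → ℝ) (ψp ψm : E2 → A) (α εm εp : A)
    (hXs : ContDiff ℝ (⊤ : ℕ∞) X) (hψps : ContDiff ℝ (⊤ : ℕ∞) ψp)
    (hψms : ContDiff ℝ (⊤ : ℕ∞) ψm)
    (hα : α * α = 1)
    -- the Koszul commutation rules between the values of the fields and the constants,
    -- for the degrees deg ψ₊ = deg ε₋ = (0,1), deg ψ₋ = deg ε₊ = (1,0), deg α = (1,1):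
    (hψpψp : ∀ p q, ψp p * ψp q = -(ψp q * ψp p))
    (hψmψm : ∀ p q, ψm p * ψm q = -(ψm q * ψm p))
    (hψpψm : ∀ p q, ψp p * ψm q = ψm q * ψp p)
    (hψpα : ∀ p, ψp p * α = -(α * ψp p))
    (hψmα : ∀ p, ψm p * α = -(α * ψm p))
    (hψpεm : ∀ p, ψp p * εm = -(εm * ψp p))
    (hψpεp : ∀ p, ψp p * εp = εp * ψp p)
    (hψmεm : ∀ p, ψm p * εm = εm * ψm p)
    (hψmεp : ∀ p, ψm p * εp = -(εp * ψm p))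
    (hαεm : α * εm = -(εm * α))
    (hαεp : α * εp = -(εp * α))
    (hεmεp : εm * εp = εp * εm)
    (hεmεm : εm * εm = -(εm * εm))
    (hεpεp : εp * εp = -(εp * εp))
    (L : E2 → A)
    (hL : L = fun p =>
      ((1/4) * pdm X p * pdp X p + (1/4) * sin (X p / 2) ^ 2) • (1 : A) +
        (1/2 : ℝ) • (ψp p * pdp ψp p) + (1/2 : ℝ) • (ψm p * pdm ψm p) -
        ((1/2) * cos (X p / 2)) • (α * (ψm p * ψp p)))
    (dX dψp dψm : E2 → A)
    (hdX : dX = fun p => εm * ψp p + εp * ψm p)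
    (hdψp : dψp = fun p => -((1/2 : ℝ) • (pdm X p • εm + sin (X p / 2) • (εp * α))))
    (hdψm : dψm = fun p => -((1/2 : ℝ) • (pdp X p • εp + sin (X p / 2) • (εm * α))))
    (dL : E2 → A)
    (hdL : dL = fun p =>
      (1/4 : ℝ) • (pdp X p • pdm dX p + pdm X p • pdp dX p) +
        (1/2 : ℝ) • (dψp p * pdp ψp p + ψp p * pdp dψp p) +
        (1/2 : ℝ) • (dψm p * pdm ψm p + ψm p * pdm dψm p) +
        ((1/8) * sin (X p)) • dX p -
        ((1/2) * cos (X p / 2)) • (α * (dψm p * ψp p + ψm p * dψp p)) +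
        ((1/4) * sin (X p / 2)) • (α * (ψm p * ψp p) * dX p)) :
    dL = fun p =>
      pdm (fun q => (1/4 : ℝ) • (εm * (pdp X q • ψp q - sin (X q / 2) • (α * ψm q)))) p +
      pdp (fun q => (1/4 : ℝ) • (εp * (pdm X q • ψm q - sin (X q / 2) • (α * ψp q)))) p := by
  subst hdL hdX hdψp hdψm
  funext p
  have hXd : Differentiable ℝ X := hXs.differentiable (by simp)
  have hψpd : Differentiable ℝ ψp := hψps.differentiable (by simp)
  have hψmd : Differentiable ℝ ψm := hψms.differentiable (by simp)
  have hX1d : Differentiable ℝ (fderiv ℝ X) :=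
    (hXs.fderiv_right (m := (⊤ : ℕ∞)) (le_refl _)).differentiable (by simp)
  have hpd : ∀ v : E2, HasFDerivAt (fun q => fderiv ℝ X q v)
      ((ContinuousLinearMap.apply ℝ ℝ v).comp (fderiv ℝ (fderiv ℝ X) p)) p := fun v =>
    (ContinuousLinearMap.apply ℝ ℝ v).hasFDerivAt.comp p (hX1d p).hasFDerivAt
  have hsin : HasFDerivAt (fun q => Real.sin (X q / 2))
      ((Real.cos (X p / 2) * (1/2)) • fderiv ℝ X p) p := by
    have h1 : HasDerivAt (fun y : ℝ => Real.sin (y / 2)) (Real.cos (X p / 2) * (1/2)) (X p) := by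
      exact ((Real.hasDerivAt_sin (X p / 2)).comp (X p) ((hasDerivAt_id' (X p)).div_const 2))
    exact h1.comp_hasFDerivAt p (hXd p).hasFDerivAt
  have hsym : fderiv ℝ (fderiv ℝ X) p (0,1) (1,0) = fderiv ℝ (fderiv ℝ X) p (1,0) (0,1) :=
    second_derivative_symmetric (fun y => (hXd y).hasFDerivAt) (hX1d p).hasFDerivAt (0,1) (1,0)
  have hsin2 : Real.sin (X p) = 2 * Real.sin (X p / 2) * Real.cos (X p / 2) := by
    have h := Real.sin_two_mul (X p / 2)
    rw [show 2 * (X p / 2) = X p by ring] at h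
    exact h
  have e1 : ∀ v : E2, fderiv ℝ (fun q => εm * ψp q + εp * ψm q) p v
      = εm * fderiv ℝ ψp p v + εp * fderiv ℝ ψm p v := by
    intro v
    have H := ((hψpd p).hasFDerivAt.const_mul εm).add ((hψmd p).hasFDerivAt.const_mul εp)
    erw [H.fderiv]
    simp [smul_eq_mul]
  have e2 : ∀ v : E2, fderiv ℝ
        (fun q => -((1/2 : ℝ) • (fderiv ℝ X q (1,0) • εm + Real.sin (X q / 2) • (εp * α)))) p v
      = -((1/2 : ℝ) • ((fderiv ℝ (fderiv ℝ X) p v (1,0)) • εm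
          + (Real.cos (X p / 2) * (1/2) * fderiv ℝ X p v) • (εp * α))) := by
    intro v
    have H := ((((hpd (1,0)).smul_const εm).add (hsin.smul_const (εp * α))).const_smul (1/2 : ℝ)).neg
    erw [H.fderiv]
    simp [smul_eq_mul, smul_smul]
  have e2' : ∀ v : E2, fderiv ℝ
        (fun q => -((1/2 : ℝ) • (fderiv ℝ X q (0,1) • εp + Real.sin (X q / 2) • (εm * α)))) p v
      = -((1/2 : ℝ) • ((fderiv ℝ (fderiv ℝ X) p v (0,1)) • εp
          + (Real.cos (X p / 2) * (1/2) * fderiv ℝ X p v) • (εm * α))) := by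
    intro v
    have H := ((((hpd (0,1)).smul_const εp).add (hsin.smul_const (εm * α))).const_smul (1/2 : ℝ)).neg
    erw [H.fderiv]
    simp [smul_eq_mul, smul_smul]
  have e3 : ∀ v : E2, fderiv ℝ
        (fun q => (1/4 : ℝ) • (εm * (fderiv ℝ X q (0,1) • ψp q - Real.sin (X q / 2) • (α * ψm q)))) p v
      = (1/4 : ℝ) • (εm * ((fderiv ℝ (fderiv ℝ X) p v (0,1)) • ψp p
          + fderiv ℝ X p (0,1) • fderiv ℝ ψp p v
          - ((Real.cos (X p / 2) * (1/2) * fderiv ℝ X p v) • (α * ψm p)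
            + Real.sin (X p / 2) • (α * fderiv ℝ ψm p v)))) := by
    intro v
    have H := (((((hpd (0,1)).smul (hψpd p).hasFDerivAt).sub
        (hsin.smul ((hψmd p).hasFDerivAt.const_mul α))).const_mul εm).const_smul (1/4 : ℝ))
    erw [H.fderiv]
    simp [smul_eq_mul, smul_smul, mul_add, mul_sub, smul_add, smul_sub, mul_smul_comm,
      smul_mul_assoc, mul_assoc]
    module
  have e3' : ∀ v : E2, fderiv ℝ
        (fun q => (1/4 : ℝ) • (εp * (fderiv ℝ X q (1,0) • ψm q - Real.sin (X q / 2) • (α * ψp q)))) p v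
      = (1/4 : ℝ) • (εp * ((fderiv ℝ (fderiv ℝ X) p v (1,0)) • ψm p
          + fderiv ℝ X p (1,0) • fderiv ℝ ψm p v
          - ((Real.cos (X p / 2) * (1/2) * fderiv ℝ X p v) • (α * ψp p)
            + Real.sin (X p / 2) • (α * fderiv ℝ ψp p v)))) := by
    intro v
    have H := (((((hpd (1,0)).smul (hψmd p).hasFDerivAt).sub
        (hsin.smul ((hψpd p).hasFDerivAt.const_mul α))).const_mul εp).const_smul (1/4 : ℝ))
    erw [H.fderiv]
    simp [smul_eq_mul, smul_smul, mul_add, mul_sub, smul_add, smul_sub, mul_smul_comm,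
      smul_mul_assoc, mul_assoc]
    module
  have hPP : ψp p * ψp p = 0 := by
    have h : ψp p * ψp p + ψp p * ψp p = 0 := by
      nth_rewrite 1 [hψpψp p p]; exact neg_add_cancel _
    calc ψp p * ψp p = (1/2 : ℝ) • (ψp p * ψp p + ψp p * ψp p) := by module
    _ = 0 := by rw [h, smul_zero]
  have hMM : ψm p * ψm p = 0 := by
    have h : ψm p * ψm p + ψm p * ψm p = 0 := by
      nth_rewrite 1 [hψmψm p p]; exact neg_add_cancel _
    calc ψm p * ψm p = (1/2 : ℝ) • (ψm p * ψm p + ψm p * ψm p) := by module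
    _ = 0 := by rw [h, smul_zero]
  simp only [pdm, pdp]
  simp only [e1, e2, e2', e3, e3', hsym, hsin2]
  exact z22_key α εm εp (ψp p) (ψm p) (fderiv ℝ ψp p (1,0)) (fderiv ℝ ψp p (0,1))
    (fderiv ℝ ψm p (1,0)) (fderiv ℝ ψm p (0,1)) (fderiv ℝ X p (1,0)) (fderiv ℝ X p (0,1))
    (fderiv ℝ (fderiv ℝ X) p (1,0) (0,1)) (Real.sin (X p / 2)) (Real.cos (X p / 2))
    hα hPP hMM (hψpψm p p) (hψpα p) (hψmα p) (hψpεm p) (hψpεp p) (hψmεm p) (hψmεp p) hαεm hαεp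
end
end

section
/- Let A be a real Banach algebra, X : ℝ² → ℝ a smooth function, ψ₊, ψ₋ : ℝ² → A smooth maps, and α ∈ A a constant, homogeneous of Z₂²-degrees deg ψ₊ = (0,1), deg ψ₋ = (1,0), deg α = (1,1), such that any two values u, v of these fields or of α satisfy uv = (−1)^⟨deg u, deg v⟩vu, and α² = 1. Assume the Z₂²-graded sine-Gordon equations of motion hold: ∂₋∂₊X·1 − ¼sin(X)·1 − ½αψ₋ψ₊ sin(X/2) = 0, ∂₊ψ₊ + ½αψ₋cos(X/2) = 0, and ∂₋ψ₋ + ½αψ₊cos(X/2) = 0. Define the Noether currents J⁻⁻ := ½α sin(X/2)ψ₋, J⁻⁺ := ½∂₋X·ψ₊, J⁺⁻ := ½∂₊X·ψ₋, J⁺⁺ := ½α sin(X/2)ψ₊. Then both currents are conserved: ∂₋J⁻⁻ + ∂₊J⁻⁺ = 0 and ∂₋J⁺⁻ + ∂₊J⁺⁺ = 0. -/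
noncomputable section

section helpers
variable {A : Type*} [NormedRing A] [NormedAlgebra ℝ A]

lemma sgAux_sq_zero {x : A} (h : x * x = -(x * x)) : x * x = 0 := by
  have h2 : (2:ℝ) • (x * x) = 0 := by
    rw [two_smul]; nth_rewrite 1 [h]; exact neg_add_cancel _
  have := smul_eq_zero.mp h2
  simpa using this.resolve_left (by norm_num)

lemma sgAux_dsmul {c : E2 → ℝ} {f : E2 → A} {p : E2}
    (hc : DifferentiableAt ℝ c p) (hf : DifferentiableAt ℝ f p) (v : E2) :
    fderiv ℝ (fun q => c q • f q) p v
      = fderiv ℝ c p v • f p + c p • fderiv ℝ f p v := by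
  rw [fderiv_fun_smul hc hf]
  simp [add_comm]

lemma sgAux_dconstmul {f : E2 → A} {p : E2} (hf : DifferentiableAt ℝ f p) (α : A) (v : E2) :
    fderiv ℝ (fun q => α * f q) p v = α * fderiv ℝ f p v := by
  rw [fderiv_const_mul hf α]
  simp [smul_eq_mul]

lemma sgAux_dsinhalf {X : E2 → ℝ} {p : E2} (hX : DifferentiableAt ℝ X p) (v : E2) :
    fderiv ℝ (fun q => Real.sin (X q / 2)) p v
      = Real.cos (X p / 2) * (fderiv ℝ X p v / 2) := by
  have h1 : HasFDerivAt (fun q => X q / 2) (((2:ℝ)⁻¹) • fderiv ℝ X p) p := by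
    have h0 : (fun q => X q / 2) = (2:ℝ)⁻¹ • X := by
      funext q; simp [div_eq_inv_mul]
    rw [h0]; exact hX.hasFDerivAt.const_smul ((2:ℝ)⁻¹)
  have h2 := (Real.hasDerivAt_sin (X p / 2)).comp_hasFDerivAt p h1
  have h3 : (fun q => Real.sin (X q / 2)) = Real.sin ∘ (fun q => X q / 2) := rfl
  rw [h3, h2.fderiv]
  simp only [ContinuousLinearMap.smul_apply, smul_eq_mul]
  ring

lemma sgAux_drealmul {g : E2 → ℝ} {p : E2} (hg : DifferentiableAt ℝ g p) (r : ℝ) (v : E2) :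
    fderiv ℝ (fun q => r * g q) p v = r * fderiv ℝ g p v := by
  rw [fderiv_const_mul hg r]; simp

end helpers

open Real in
/-- Conservation of the Noether currents of the `ℤ₂²`-graded sine-Gordon model:
on-shell, `∂₋J⁻⁻ + ∂₊J⁻⁺ = 0` and `∂₋J⁺⁻ + ∂₊J⁺⁺ = 0`, where
`J⁻⁻ = ½α sin(X/2)ψ₋`, `J⁻⁺ = ½∂₋X ψ₊`, `J⁺⁻ = ½∂₊X ψ₋` and `J⁺⁺ = ½α sin(X/2)ψ₊`. -/
theorem z22_sine_gordon_noether_currents_conserved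
    {A : Type*} [NormedRing A] [NormedAlgebra ℝ A] [CompleteSpace A]
    (X : E2 → ℝ) (ψp ψm : E2 → A) (α : A)
    (hXs : ContDiff ℝ (⊤ : ℕ∞) X) (hψps : ContDiff ℝ (⊤ : ℕ∞) ψp)
    (hψms : ContDiff ℝ (⊤ : ℕ∞) ψm)
    (hα : α * α = 1)
    -- the Koszul commutation rules for deg ψ₊ = (0,1), deg ψ₋ = (1,0), deg α = (1,1):
    (hψpψp : ∀ p q, ψp p * ψp q = -(ψp q * ψp p))
    (hψmψm : ∀ p q, ψm p * ψm q = -(ψm q * ψm p))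
    (hψpψm : ∀ p q, ψp p * ψm q = ψm q * ψp p)
    (hψpα : ∀ p, ψp p * α = -(α * ψp p))
    (hψmα : ∀ p, ψm p * α = -(α * ψm p))
    -- the ℤ₂²-graded sine-Gordon equations of motion:
    (heomX : ∀ p, (pdm (pdp X) p - (1/4) * sin (X p)) • (1 : A) -
      ((1/2) * sin (X p / 2)) • (α * (ψm p * ψp p)) = 0)
    (heomp : ∀ p, pdp ψp p + ((1/2) * cos (X p / 2)) • (α * ψm p) = 0)
    (heomm : ∀ p, pdm ψm p + ((1/2) * cos (X p / 2)) • (α * ψp p) = 0) :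
    (∀ p, pdm (fun q => ((1/2) * sin (X q / 2)) • (α * ψm q)) p +
        pdp (fun q => ((1/2) * pdm X q) • ψp q) p = 0) ∧
    (∀ p, pdm (fun q => ((1/2) * pdp X q) • ψm q) p +
        pdp (fun q => ((1/2) * sin (X q / 2)) • (α * ψp q)) p = 0) := by
  -- differentiability facts
  have hXd : Differentiable ℝ X := hXs.differentiable (by simp)
  have hψpd : Differentiable ℝ ψp := hψps.differentiable (by simp)
  have hψmd : Differentiable ℝ ψm := hψms.differentiable (by simp)
  have hX1 : ContDiff ℝ (⊤ : ℕ∞) (fderiv ℝ X) := hXs.fderiv_right (by exact_mod_cast (le_top : ((⊤:ℕ∞)+1 : ℕ∞) ≤ ⊤))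
  have hsinD : ∀ p, DifferentiableAt ℝ (fun q => (1/2 : ℝ) * Real.sin (X q / 2)) p := by
    intro p
    exact ((Real.contDiff_sin.comp (hXs.div_const 2)).differentiable (by simp) p).const_mul _
  have hsinD' : ∀ p, DifferentiableAt ℝ (fun q => Real.sin (X q / 2)) p := by
    intro p
    exact (Real.contDiff_sin.comp (hXs.div_const 2)).differentiable (by simp) p
  have hpdmXD : Differentiable ℝ (fun q => fderiv ℝ X q (1,0)) :=
    (hX1.clm_apply contDiff_const).differentiable (by simp)
  have hpdpXD : Differentiable ℝ (fun q => fderiv ℝ X q (0,1)) :=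
    (hX1.clm_apply contDiff_const).differentiable (by simp)
  -- symmetry of the second derivative
  have hsymm : ∀ p v w, fderiv ℝ (fun q => fderiv ℝ X q v) p w
      = fderiv ℝ (fun q => fderiv ℝ X q w) p v := by
    intro p v w
    have hsd : IsSymmSndFDerivAt ℝ X p :=
      hXs.contDiffAt.isSymmSndFDerivAt (n := (⊤ : ℕ∞)) (by
        rw [show (2 : WithTop ℕ∞) = ((2:ℕ∞) : WithTop ℕ∞) from rfl]
        rw [minSmoothness_of_isRCLikeNormedField]; exact WithTop.coe_le_coe.mpr le_top)
    have hXdd : DifferentiableAt ℝ (fderiv ℝ X) p :=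
      (hX1.differentiable (by simp)) p
    have key : ∀ u : E2, fderiv ℝ (fun q => fderiv ℝ X q u) p
        = (fderiv ℝ (fderiv ℝ X) p).flip u := by
      intro u
      have := fderiv_clm_apply (c := fderiv ℝ X) (u := fun _ => u) hXdd
        (differentiableAt_const u)
      simpa using this
    rw [key v, key w]
    simpa [ContinuousLinearMap.flip_apply] using (hsd w v)
  -- squares vanish
  have psq : ∀ p, ψp p * ψp p = 0 := fun p => sgAux_sq_zero (hψpψp p p)
  have msq : ∀ p, ψm p * ψm p = 0 := fun p => sgAux_sq_zero (hψmψm p p)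
  -- consequences of the bosonic equation of motion
  have hDp : ∀ p, (pdm (pdp X) p - (1/4) * Real.sin (X p)) • ψp p = 0 := by
    intro p
    have h := sub_eq_zero.mp (heomX p)
    have h2 := congrArg (fun z => z * ψp p) h
    simp only [smul_mul_assoc, one_mul] at h2
    rw [h2, mul_assoc, mul_assoc, psq p]
    simp
  have hDm : ∀ p, (pdm (pdp X) p - (1/4) * Real.sin (X p)) • ψm p = 0 := by
    intro p
    have h := sub_eq_zero.mp (heomX p)
    have h2 := congrArg (fun z => z * ψm p) h
    simp only [smul_mul_assoc, one_mul] at h2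
    rw [h2, mul_assoc, mul_assoc, hψpψm p p, ← mul_assoc (ψm p), msq p]
    simp
  -- fermionic equations of motion, solved form
  have hpψ : ∀ p, pdp ψp p = -(((1/2) * Real.cos (X p / 2)) • (α * ψm p)) :=
    fun p => eq_neg_of_add_eq_zero_left (heomp p)
  have hmψ : ∀ p, pdm ψm p = -(((1/2) * Real.cos (X p / 2)) • (α * ψp p)) :=
    fun p => eq_neg_of_add_eq_zero_left (heomm p)
  -- double angle
  have hdbl : ∀ p, Real.sin (X p) = 2 * (Real.sin (X p / 2) * Real.cos (X p / 2)) := by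
    intro p
    have := Real.sin_two_mul (X p / 2)
    rw [show 2 * (X p / 2) = X p by ring] at this
    rw [this]; ring
  constructor
  · intro p
    have e1 : pdm (fun q => ((1/2) * Real.sin (X q / 2)) • (α * ψm q)) p
        = ((1/2) * (Real.cos (X p / 2) * (pdm X p / 2))) • (α * ψm p)
          + ((1/2) * Real.sin (X p / 2)) • (α * pdm ψm p) := by
      simp only [pdm]
      rw [sgAux_dsmul (hsinD p) ((hψmd p).const_mul α),
        sgAux_drealmul (hsinD' p), sgAux_dsinhalf (hXd p),
        sgAux_dconstmul (hψmd p)]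
    have e2 : pdp (fun q => ((1/2) * pdm X q) • ψp q) p
        = ((1/2) * pdm (pdp X) p) • ψp p + ((1/2) * pdm X p) • pdp ψp p := by
      simp only [pdm, pdp]
      rw [sgAux_dsmul (by exact ((hpdmXD p).const_mul _)) (hψpd p),
        sgAux_drealmul (hpdmXD p), hsymm p (1,0) (0,1)]
      rfl
    rw [e1, e2, hmψ p, hpψ p]
    have hcollect : ((1/2) * (Real.cos (X p / 2) * (pdm X p / 2))) • (α * ψm p)
          + ((1/2) * Real.sin (X p / 2)) •
              (α * -(((1/2) * Real.cos (X p / 2)) • (α * ψp p)))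
          + (((1/2) * pdm (pdp X) p) • ψp p
            + ((1/2) * pdm X p) • -(((1/2) * Real.cos (X p / 2)) • (α * ψm p)))
        = ((1/2) : ℝ) • ((pdm (pdp X) p - (1/4) * Real.sin (X p)) • ψp p) := by
      rw [hdbl p]
      simp only [mul_neg, mul_smul_comm, smul_neg, smul_smul, ← mul_assoc, hα, one_mul]
      module
    rw [hcollect, hDp p, smul_zero]
  · intro p
    have e1 : pdm (fun q => ((1/2) * pdp X q) • ψm q) p
        = ((1/2) * pdm (pdp X) p) • ψm p + ((1/2) * pdp X p) • pdm ψm p := by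
      simp only [pdm, pdp]
      rw [sgAux_dsmul (by exact ((hpdpXD p).const_mul _)) (hψmd p),
        sgAux_drealmul (hpdpXD p)]
      rfl
    have e2 : pdp (fun q => ((1/2) * Real.sin (X q / 2)) • (α * ψp q)) p
        = ((1/2) * (Real.cos (X p / 2) * (pdp X p / 2))) • (α * ψp p)
          + ((1/2) * Real.sin (X p / 2)) • (α * pdp ψp p) := by
      simp only [pdm, pdp]
      rw [sgAux_dsmul (hsinD p) ((hψpd p).const_mul α),
        sgAux_drealmul (hsinD' p), sgAux_dsinhalf (hXd p),
        sgAux_dconstmul (hψpd p)]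
    rw [e1, e2, hmψ p, hpψ p]
    have hcollect : ((1/2) * pdm (pdp X) p) • ψm p
          + ((1/2) * pdp X p) • -(((1/2) * Real.cos (X p / 2)) • (α * ψp p))
          + (((1/2) * (Real.cos (X p / 2) * (pdp X p / 2))) • (α * ψp p)
            + ((1/2) * Real.sin (X p / 2)) •
                (α * -(((1/2) * Real.cos (X p / 2)) • (α * ψm p))))
        = ((1/2) : ℝ) • ((pdm (pdp X) p - (1/4) * Real.sin (X p)) • ψm p) := by
      rw [hdbl p]
      simp only [mul_neg, mul_smul_comm, smul_neg, smul_smul, ← mul_assoc, hα, one_mul]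
      module
    rw [hcollect, hDm p, smul_zero]
end
end

section
/- Let A be a real Banach algebra and let Y, χ₋, χ₊, G : ℝ² → A be smooth fields and ε₋, ε₊ ∈ A constants, homogeneous of Z₂²-degrees deg Y = (1,1), deg χ₋ = deg ε₋ = (0,1), deg χ₊ = deg ε₊ = (1,0), deg G = (0,0), such that any two values u, v of these fields or constants satisfy uv = (−1)^⟨deg u, deg v⟩vu. Define the exotic component Lagrangian L := −¼∂₋Y∂₊Y + ½χ₋∂₋χ₋ + ½χ₊∂₊χ₊ + G², the supersymmetry variations δG := −½ε₋∂₋χ₋ − ½ε₊∂₊χ₊, δY := ε₋χ₊ + ε₊χ₋, δχ₋ := −½ε₊∂₊Y + ε₋G, δχ₊ := −½ε₋∂₋Y + ε₊G, and the first variation δL := −¼(∂₋(δY)∂₊Y + ∂₋Y∂₊(δY)) + ½(δχ₋∂₋χ₋ + χ₋∂₋(δχ₋)) + ½(δχ₊∂₊χ₊ + χ₊∂₊(δχ₊)) + δG·G + G·δG. If the equations of motion G = 0, ∂₋∂₊Y = 0, ∂₋χ₋ = 0, ∂₊χ₊ = 0 hold, then δL = ∂₋( ¼ε₋∂₊Y·χ₊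 ) + ∂₊( ¼ε₊∂₋Y·χ₋ ); i.e. the exotic Lagrangian is quasi-invariant under Z₂²-supersymmetry. -/
noncomputable section

section helpers
variable {A : Type*} [NormedRing A] [NormedAlgebra ℝ A]

lemma pdh_mul {f g : E2 → A} (hf : Differentiable ℝ f) (hg : Differentiable ℝ g)
    (p v : E2) :
    fderiv ℝ (fun q => f q * g q) p v = fderiv ℝ f p v * g p + f p * fderiv ℝ g p v := by
  rw [fderiv_fun_mul' (hf p) (hg p)]
  simp [smul_eq_mul, add_comm]

lemma pdh_const_mul {f : E2 → A} (hf : Differentiable ℝ f) (c : A) (p v : E2) :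
    fderiv ℝ (fun q => c * f q) p v = c * fderiv ℝ f p v := by
  rw [fderiv_const_mul (hf p)]; simp [smul_eq_mul]

lemma pdh_mul_const {f : E2 → A} (hf : Differentiable ℝ f) (c : A) (p v : E2) :
    fderiv ℝ (fun q => f q * c) p v = fderiv ℝ f p v * c := by
  rw [fderiv_mul_const' (hf p)]; simp

lemma pdh_smul {f : E2 → A} (hf : Differentiable ℝ f) (r : ℝ) (p v : E2) :
    fderiv ℝ (fun q => r • f q) p v = r • fderiv ℝ f p v := by
  rw [fderiv_fun_const_smul (hf p)]; simp

lemma pdh_neg {f : E2 → A} (p v : E2) :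
    fderiv ℝ (fun q => -(f q)) p v = -(fderiv ℝ f p v) := by
  rw [fderiv_fun_neg]; simp

lemma pdh_add {f g : E2 → A} (hf : Differentiable ℝ f) (hg : Differentiable ℝ g) (p v : E2) :
    fderiv ℝ (fun q => f q + g q) p v = fderiv ℝ f p v + fderiv ℝ g p v := by
  rw [fderiv_fun_add (hf p) (hg p)]; simp

lemma pdh_anticomm {f : E2 → A} (hf : Differentiable ℝ f) {c : A}
    (h : ∀ q, f q * c = -(c * f q)) (p v : E2) :
    fderiv ℝ f p v * c = -(c * fderiv ℝ f p v) := by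
  have h1 : (fun q => f q * c) = fun q => -(c * f q) := funext h
  calc fderiv ℝ f p v * c = fderiv ℝ (fun q => f q * c) p v := (pdh_mul_const hf c p v).symm
    _ = fderiv ℝ (fun q => -(c * f q)) p v := by rw [h1]
    _ = -(c * fderiv ℝ f p v) := by rw [pdh_neg (f := fun q => c * f q), pdh_const_mul hf]

lemma pdh_diff {f : E2 → A} (hf : ContDiff ℝ (⊤ : ℕ∞) f) (v : E2) :
    Differentiable ℝ (fun q => fderiv ℝ f q v) := by
  have hd : ContDiff ℝ ((⊤:ℕ∞) : WithTop ℕ∞) (fderiv ℝ f) :=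
    hf.fderiv_right (m := ((⊤:ℕ∞) : WithTop ℕ∞)) (by norm_cast)
  exact (hd.clm_apply contDiff_const).differentiable (by norm_cast)

lemma pdh_symm {f : E2 → A} (hf : ContDiff ℝ (⊤ : ℕ∞) f) (p v w : E2) :
    fderiv ℝ (fun q => fderiv ℝ f q w) p v = fderiv ℝ (fun q => fderiv ℝ f q v) p w := by
  have hd : Differentiable ℝ (fderiv ℝ f) :=
    (hf.fderiv_right (m := ((⊤:ℕ∞) : WithTop ℕ∞)) (by norm_cast)).differentiable (by norm_cast)
  have key : ∀ u z : E2, fderiv ℝ (fun q => fderiv ℝ f q u) p z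
      = fderiv ℝ (fderiv ℝ f) p z u := by
    intro u z
    have := fderiv_clm_apply (𝕜 := ℝ) (c := fderiv ℝ f) (u := fun _ => u)
      (hd p) (differentiableAt_const u)
    rw [show (fun q => fderiv ℝ f q u) = (fun q => (fderiv ℝ f q) ((fun _ => u) q)) from rfl,
      this]
    simp
  rw [key, key]
  have hsymm : IsSymmSndFDerivAt ℝ f p := by
    apply (hf.contDiffAt).isSymmSndFDerivAt
    simp only [minSmoothness_of_isRCLikeNormedField]; norm_cast
  exact hsymm v w

end helpers

/-- Quasi-invariance of the `ℤ₂²`-graded exotic scalar field theory Lagrangian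
`L = −¼∂₋Y∂₊Y + ½χ₋∂₋χ₋ + ½χ₊∂₊χ₊ + G²` under `ℤ₂²`-supersymmetry: on-shell,
`δL = ∂₋(¼ε₋∂₊Y χ₊) + ∂₊(¼ε₊∂₋Y χ₋)`. -/
theorem exotic_scalar_field_lagrangian_quasi_invariant
    {A : Type*} [NormedRing A] [NormedAlgebra ℝ A] [CompleteSpace A]
    (Y χm χp G : E2 → A) (εm εp : A)
    (hYs : ContDiff ℝ (⊤ : ℕ∞) Y) (hχms : ContDiff ℝ (⊤ : ℕ∞) χm)
    (hχps : ContDiff ℝ (⊤ : ℕ∞) χp) (hGs : ContDiff ℝ (⊤ : ℕ∞) G)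
    -- the Koszul commutation rules for the degrees deg Y = (1,1), deg χ₋ = deg ε₋ = (0,1),
    -- deg χ₊ = deg ε₊ = (1,0), deg G = (0,0):
    (hYY : ∀ p q, Y p * Y q = Y q * Y p)
    (hYχm : ∀ p q, Y p * χm q = -(χm q * Y p))
    (hYχp : ∀ p q, Y p * χp q = -(χp q * Y p))
    (hYεm : ∀ p, Y p * εm = -(εm * Y p))
    (hYεp : ∀ p, Y p * εp = -(εp * Y p))
    (hχmχm : ∀ p q, χm p * χm q = -(χm q * χm p))
    (hχpχp : ∀ p q, χp p * χp q = -(χp q * χp p))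
    (hχmχp : ∀ p q, χm p * χp q = χp q * χm p)
    (hχmεm : ∀ p, χm p * εm = -(εm * χm p))
    (hχmεp : ∀ p, χm p * εp = εp * χm p)
    (hχpεp : ∀ p, χp p * εp = -(εp * χp p))
    (hχpεm : ∀ p, χp p * εm = εm * χp p)
    (hGY : ∀ p q, G p * Y q = Y q * G p)
    (hGχm : ∀ p q, G p * χm q = χm q * G p)
    (hGχp : ∀ p q, G p * χp q = χp q * G p)
    (hGG : ∀ p q, G p * G q = G q * G p)
    (hGεm : ∀ p, G p * εm = εm * G p)
    (hGεp : ∀ p, G p * εp = εp * G p)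
    (hεmεp : εm * εp = εp * εm)
    (hεmεm : εm * εm = -(εm * εm))
    (hεpεp : εp * εp = -(εp * εp))
    (L : E2 → A)
    (hL : L = fun p => -((1/4 : ℝ) • (pdm Y p * pdp Y p)) + (1/2 : ℝ) • (χm p * pdm χm p) +
      (1/2 : ℝ) • (χp p * pdp χp p) + G p * G p)
    (dG dY dχm dχp : E2 → A)
    (hdG : dG = fun p => -((1/2 : ℝ) • (εm * pdm χm p)) - (1/2 : ℝ) • (εp * pdp χp p))
    (hdY : dY = fun p => εm * χp p + εp * χm p)
    (hdχm : dχm = fun p => -((1/2 : ℝ) • (εp * pdp Y p)) + εm * G p)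
    (hdχp : dχp = fun p => -((1/2 : ℝ) • (εm * pdm Y p)) + εp * G p)
    (dL : E2 → A)
    (hdL : dL = fun p =>
      -((1/4 : ℝ) • (pdm dY p * pdp Y p + pdm Y p * pdp dY p)) +
        (1/2 : ℝ) • (dχm p * pdm χm p + χm p * pdm dχm p) +
        (1/2 : ℝ) • (dχp p * pdp χp p + χp p * pdp dχp p) +
        dG p * G p + G p * dG p)
    -- the equations of motion:
    (heomG : G = 0) (heomY : pdm (pdp Y) = 0)
    (heomχm : pdm χm = 0) (heomχp : pdp χp = 0) :
    dL = fun p =>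
      pdm (fun q => (1/4 : ℝ) • (εm * (pdp Y q * χp q))) p +
      pdp (fun q => (1/4 : ℝ) • (εp * (pdm Y q * χm q))) p := by
  subst heomG hdY hdχm hdχp hdG hdL
  have hYd : Differentiable ℝ Y := hYs.differentiable (by norm_cast)
  have hχmd : Differentiable ℝ χm := hχms.differentiable (by norm_cast)
  have hχpd : Differentiable ℝ χp := hχps.differentiable (by norm_cast)
  have hpdpY : Differentiable ℝ (fun q => fderiv ℝ Y q ((0:ℝ),(1:ℝ))) := pdh_diff hYs _
  have hpdmY : Differentiable ℝ (fun q => fderiv ℝ Y q ((1:ℝ),(0:ℝ))) := pdh_diff hYs _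
  have h1 : ∀ q, fderiv ℝ χm q ((1:ℝ),(0:ℝ)) = 0 := by
    intro q; have := congrFun heomχm q; simpa [pdm] using this
  have h2 : ∀ q, fderiv ℝ χp q ((0:ℝ),(1:ℝ)) = 0 := by
    intro q; have := congrFun heomχp q; simpa [pdp] using this
  have h3 : ∀ q, fderiv ℝ (fun r => fderiv ℝ Y r ((0:ℝ),(1:ℝ))) q ((1:ℝ),(0:ℝ)) = 0 := by
    intro q; have := congrFun heomY q; exact this
  have h4 : ∀ q, fderiv ℝ (fun r => fderiv ℝ Y r ((1:ℝ),(0:ℝ))) q ((0:ℝ),(1:ℝ)) = 0 := by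
    intro q; rw [pdh_symm hYs]; exact h3 q
  funext p
  simp only [pdm, pdp, Pi.zero_apply, mul_zero, zero_mul, add_zero, zero_add]
  -- derivative computations
  have A1 : fderiv ℝ (fun q => εm * χp q + εp * χm q) p ((1:ℝ),(0:ℝ))
      = εm * fderiv ℝ χp p ((1:ℝ),(0:ℝ)) := by
    rw [pdh_add (hχpd.const_mul εm) (hχmd.const_mul εp),
      pdh_const_mul hχpd, pdh_const_mul hχmd, h1]
    simp
  have A2 : fderiv ℝ (fun q => εm * χp q + εp * χm q) p ((0:ℝ),(1:ℝ))
      = εp * fderiv ℝ χm p ((0:ℝ),(1:ℝ)) := by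
    rw [pdh_add (hχpd.const_mul εm) (hχmd.const_mul εp),
      pdh_const_mul hχpd, pdh_const_mul hχmd, h2]
    simp
  have A3 : fderiv ℝ (fun q => -((1/2 : ℝ) • (εp * fderiv ℝ Y q ((0:ℝ),(1:ℝ))))) p ((1:ℝ),(0:ℝ))
      = 0 := by
    rw [pdh_neg (f := fun q => (1/2 : ℝ) • (εp * fderiv ℝ Y q ((0:ℝ),(1:ℝ)))),
      pdh_smul (hpdpY.const_mul εp), pdh_const_mul hpdpY, h3]
    simp
  have A4 : fderiv ℝ (fun q => -((1/2 : ℝ) • (εm * fderiv ℝ Y q ((1:ℝ),(0:ℝ))))) p ((0:ℝ),(1:ℝ))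
      = 0 := by
    rw [pdh_neg (f := fun q => (1/2 : ℝ) • (εm * fderiv ℝ Y q ((1:ℝ),(0:ℝ)))),
      pdh_smul (hpdmY.const_mul εm), pdh_const_mul hpdmY, h4]
    simp
  have B1 : fderiv ℝ (fun q => (1/4 : ℝ) • (εm * (fderiv ℝ Y q ((0:ℝ),(1:ℝ)) * χp q))) p ((1:ℝ),(0:ℝ))
      = (1/4 : ℝ) • (εm * (fderiv ℝ Y p ((0:ℝ),(1:ℝ)) * fderiv ℝ χp p ((1:ℝ),(0:ℝ)))) := by
    rw [pdh_smul ((hpdpY.fun_mul hχpd).const_mul εm), pdh_const_mul (hpdpY.fun_mul hχpd),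
      pdh_mul hpdpY hχpd, h3]
    simp
  have B2 : fderiv ℝ (fun q => (1/4 : ℝ) • (εp * (fderiv ℝ Y q ((1:ℝ),(0:ℝ)) * χm q))) p ((0:ℝ),(1:ℝ))
      = (1/4 : ℝ) • (εp * (fderiv ℝ Y p ((1:ℝ),(0:ℝ)) * fderiv ℝ χm p ((0:ℝ),(1:ℝ)))) := by
    rw [pdh_smul ((hpdmY.fun_mul hχmd).const_mul εp), pdh_const_mul (hpdmY.fun_mul hχmd),
      pdh_mul hpdmY hχmd, h4]
    simp
  rw [A1, A2, A3, A4, B1, B2, h1, h2]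
  -- commutation facts for derivatives
  have C0 : ∀ p' q v, fderiv ℝ χp q v * Y p' = -(Y p' * fderiv ℝ χp q v) := fun p' q v =>
    pdh_anticomm hχpd (fun q' => by rw [hYχp, neg_neg]) q v
  have C1 : ∀ v w, fderiv ℝ Y p w * fderiv ℝ χp p v
      = -(fderiv ℝ χp p v * fderiv ℝ Y p w) := fun v w =>
    pdh_anticomm hYd (fun q' => by rw [C0 q' p v, neg_neg]) p w
  have C2 : ∀ v, fderiv ℝ Y p v * εp = -(εp * fderiv ℝ Y p v) := fun v =>
    pdh_anticomm hYd hYεp p v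
  -- final algebra
  set a := fderiv ℝ Y p ((1:ℝ),(0:ℝ)) with ha
  set b := fderiv ℝ Y p ((0:ℝ),(1:ℝ)) with hb
  set c := fderiv ℝ χp p ((1:ℝ),(0:ℝ)) with hc
  set d := fderiv ℝ χm p ((0:ℝ),(1:ℝ)) with hd
  have hcb : c * b = -(b * c) := by
    rw [hc, hb, C1 ((1:ℝ),(0:ℝ)) ((0:ℝ),(1:ℝ)), neg_neg]
  have e1 : εm * c * b = -(εm * (b * c)) := by
    rw [mul_assoc, hcb, mul_neg]
  have e2 : a * (εp * d) = -(εp * (a * d)) := by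
    rw [ha, hd, ← mul_assoc, C2 _, neg_mul, mul_assoc]
  rw [e1, e2]
  simp only [smul_add, smul_neg, neg_add_rev, neg_neg, mul_zero, add_zero, smul_zero]
  abel
end
end

section
/- Let R₀ be a commutative ring and work in the formal power series ring R₀[[z]]. Call a power series even if it contains only even powers of z and odd if it contains only odd powers of z. Let A be a 3×3 matrix over R₀[[z]] such that the entries A₁₁, A₁₂, A₂₁, A₂₂ and A₃₃ are even while A₁₃, A₂₃, A₃₁, A₃₂ are odd, and let D be a 2×2 matrix over R₀[[z]] such that D₁₁ and D₂₂ are even with invertible constant term and D₁₂, D₂₁ are odd. Then det(D) is even and invertible in R₀[[z]], det(A) is even, and the Z₂²-Berezinian det(A)·det(D)⁻¹ is an even power series; in particular its coefficient of z¹ vanishes. Consequently, the Z₂²-Berezinian of the Jacobian of a general degree-preserving coordinate change on ℝ^{2|1,1,1} contains no term of the form z·f(t,s). -/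
noncomputable section

open PowerSeries

/-- A formal power series is *even* if it contains only even powers of `z`. -/
def EvenPS {R₀ : Type*} [CommRing R₀] (f : PowerSeries R₀) : Prop :=
  ∀ n : ℕ, Odd n → PowerSeries.coeff n f = 0

/-- A formal power series is *odd* if it contains only odd powers of `z`. -/
def OddPS {R₀ : Type*} [CommRing R₀] (f : PowerSeries R₀) : Prop :=
  ∀ n : ℕ, Even n → PowerSeries.coeff n f = 0

section lemmas
variable {R₀ : Type*} [CommRing R₀] {f g : PowerSeries R₀}

lemma EvenPS.add (hf : EvenPS f) (hg : EvenPS g) : EvenPS (f + g) := by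
  intro n hn; rw [map_add, hf n hn, hg n hn, add_zero]

lemma EvenPS.sub (hf : EvenPS f) (hg : EvenPS g) : EvenPS (f - g) := by
  intro n hn; rw [map_sub, hf n hn, hg n hn, sub_zero]

lemma EvenPS.mul_even (hf : EvenPS f) (hg : EvenPS g) : EvenPS (f * g) := by
  intro n hn
  rw [PowerSeries.coeff_mul]
  apply Finset.sum_eq_zero
  intro p hp
  rw [Finset.HasAntidiagonal.mem_antidiagonal] at hp
  obtain ⟨k, hk⟩ := hn
  rcases Nat.even_or_odd p.1 with ⟨a, ha⟩ | h1
  · rw [hg p.2 ⟨k - a, by omega⟩, mul_zero]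
  · rw [hf p.1 h1, zero_mul]

lemma OddPS.mul_odd (hf : OddPS f) (hg : OddPS g) : EvenPS (f * g) := by
  intro n hn
  rw [PowerSeries.coeff_mul]
  apply Finset.sum_eq_zero
  intro p hp
  rw [Finset.HasAntidiagonal.mem_antidiagonal] at hp
  obtain ⟨k, hk⟩ := hn
  rcases Nat.even_or_odd p.1 with h1 | ⟨a, ha⟩
  · rw [hf p.1 h1, zero_mul]
  · rw [hg p.2 ⟨k - a, by omega⟩, mul_zero]

lemma EvenPS.mul_odd (hf : EvenPS f) (hg : OddPS g) : OddPS (f * g) := by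
  intro n hn
  rw [PowerSeries.coeff_mul]
  apply Finset.sum_eq_zero
  intro p hp
  rw [Finset.HasAntidiagonal.mem_antidiagonal] at hp
  obtain ⟨k, hk⟩ := hn
  rcases Nat.even_or_odd p.1 with ⟨a, ha⟩ | h1
  · rw [hg p.2 ⟨k - a, by omega⟩, mul_zero]
  · rw [hf p.1 h1, zero_mul]

lemma OddPS.mul_even (hf : OddPS f) (hg : EvenPS g) : OddPS (f * g) := by
  intro n hn
  rw [PowerSeries.coeff_mul]
  apply Finset.sum_eq_zero
  intro p hp
  rw [Finset.HasAntidiagonal.mem_antidiagonal] at hp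
  obtain ⟨k, hk⟩ := hn
  rcases Nat.even_or_odd p.1 with h1 | ⟨a, ha⟩
  · rw [hf p.1 h1, zero_mul]
  · rw [hg p.2 ⟨k - a - 1, by omega⟩, mul_zero]

lemma EvenPS.inverse (hf : EvenPS f) (hu : IsUnit (PowerSeries.constantCoeff f)) :
    EvenPS (Ring.inverse f) := by
  have hfu : IsUnit f := PowerSeries.isUnit_iff_constantCoeff.mpr hu
  intro n hn
  induction n using Nat.strong_induction_on with
  | _ n ih =>
    have h1 : f * Ring.inverse f = 1 := Ring.mul_inverse_cancel f hfu
    have h2 : PowerSeries.coeff n (f * Ring.inverse f) = 0 := by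
      rw [h1, PowerSeries.coeff_one]
      have : n ≠ 0 := by rintro rfl; exact (Nat.not_odd_zero) hn
      simp [this]
    rw [PowerSeries.coeff_mul] at h2
    rw [Finset.sum_eq_single (0, n)] at h2
    · simp only [PowerSeries.coeff_zero_eq_constantCoeff] at h2
      exact (hu.mul_right_eq_zero).mp h2
    · intro p hp hne
      rw [Finset.HasAntidiagonal.mem_antidiagonal] at hp
      rcases Nat.even_or_odd p.1 with h1' | h1'
      · have hp1 : p.1 ≠ 0 := by
          rintro h0
          apply hne
          have : p.2 = n := by omega
          exact Prod.ext h0 this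
        have hodd : Odd p.2 := by
          obtain ⟨a, ha⟩ := h1'
          obtain ⟨k, hk⟩ := hn
          exact ⟨k - a, by omega⟩
        rw [ih p.2 (by omega) hodd, mul_zero]
      · rw [hf p.1 h1', zero_mul]
    · intro h
      simp [Finset.mem_antidiagonal] at h

end lemmas

/-- Proposition B.5: for the block-diagonal Jacobian of a general degree-preserving
coordinate change on `ℝ^{2|1,1,1}`, with `3 × 3` block `A` and `2 × 2` block `D` over
`R₀[[z]]` having the stated `z`-parity pattern, `det D` is even and invertible, `det A`
is even, and the `ℤ₂²`-Berezinian `det(A)·det(D)⁻¹` is an even power series; in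
particular its coefficient of `z¹` vanishes, so the `ℤ₂²`-Berezinian of the Jacobian
contains no term of the form `z·f(t,s)`. -/
theorem z22_berezinian_of_jacobian_is_even
    {R₀ : Type*} [CommRing R₀]
    (A : Matrix (Fin 3) (Fin 3) (PowerSeries R₀))
    (D : Matrix (Fin 2) (Fin 2) (PowerSeries R₀))
    (hA11 : EvenPS (A 0 0)) (hA12 : EvenPS (A 0 1))
    (hA21 : EvenPS (A 1 0)) (hA22 : EvenPS (A 1 1)) (hA33 : EvenPS (A 2 2))
    (hA13 : OddPS (A 0 2)) (hA23 : OddPS (A 1 2))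
    (hA31 : OddPS (A 2 0)) (hA32 : OddPS (A 2 1))
    (hD11 : EvenPS (D 0 0)) (hD22 : EvenPS (D 1 1))
    (hD12 : OddPS (D 0 1)) (hD21 : OddPS (D 1 0))
    (hD11u : IsUnit (PowerSeries.constantCoeff (D 0 0)))
    (hD22u : IsUnit (PowerSeries.constantCoeff (D 1 1))) :
    EvenPS D.det ∧ IsUnit D.det ∧ EvenPS A.det ∧
    EvenPS (A.det * Ring.inverse D.det) ∧
    PowerSeries.coeff 1 (A.det * Ring.inverse D.det) = 0 := by
  have hdetD : D.det = D 0 0 * D 1 1 - D 0 1 * D 1 0 := Matrix.det_fin_two D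
  have hDE : EvenPS D.det := by
    rw [hdetD]; exact (hD11.mul_even hD22).sub (hD12.mul_odd hD21)
  have hcD : IsUnit (PowerSeries.constantCoeff D.det) := by
    have h0 : PowerSeries.constantCoeff (D 0 1 * D 1 0) = 0 := by
      rw [← PowerSeries.coeff_zero_eq_constantCoeff_apply, PowerSeries.coeff_mul]
      apply Finset.sum_eq_zero
      intro p hp
      rw [Finset.HasAntidiagonal.mem_antidiagonal] at hp
      have h1 : p.1 = 0 := by omega
      rw [h1, hD12 0 Even.zero, zero_mul]
    rw [hdetD, map_sub, map_mul, h0, sub_zero]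
    exact hD11u.mul hD22u
  have hDu : IsUnit D.det := PowerSeries.isUnit_iff_constantCoeff.mpr hcD
  have hAE : EvenPS A.det := by
    rw [Matrix.det_fin_three]
    exact ((((((hA11.mul_even hA22).mul_even hA33).sub
      ((hA11.mul_odd hA23).mul_odd hA32)).sub
      ((hA12.mul_even hA21).mul_even hA33)).add
      ((hA12.mul_odd hA23).mul_odd hA31)).add
      ((hA13.mul_even hA21).mul_odd hA32)).sub
      ((hA13.mul_even hA22).mul_odd hA31)
  have hBer : EvenPS (A.det * Ring.inverse D.det) :=
    hAE.mul_even (hDE.inverse hcD)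
  exact ⟨hDE, hDu, hAE, hBer, hBer 1 odd_one⟩
end
end
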